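/- In a τ-regularized finite MDP whose induced Markov chain is irreducible under every policy, any policy π that is not the (unique) optimal policy satisfies the strict inequality Q^π(s,a) < Q^{π*}(s,a) for every state-action pair (s,a); hence argmax_{π∈Π} Q^π(s,a) = {π*} is a singleton for every (s,a). -/

import Mathlib

open scoped BigOperators

noncomputable section

def stateDist {S A : Type*} [Fintype S] [Fintype A] (P : S → A → S → ℝ)
    (π : S → A → ℝ) (ρ : S → ℝ) : ℕ → S → ℝ
  | 0 => ρ
  | t + 1 => fun s' => ∑ s, ∑ a, stateDist P π ρ t s * π s a * P s a s'

def valueFun {S A : Type*} [Fintype S] [Fintype A] (γ τ : ℝ) (r : S → A → ℝ)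
    (P : S → A → S → ℝ) (h : S → (A → ℝ) → ℝ) (π : S → A → ℝ) (ρ : S → ℝ) : ℝ :=
  ∑' t : ℕ, γ ^ t * ∑ s, stateDist P π ρ t s *
    ((∑ a, π s a * r s a) - τ * h s (π s))

def valueFunState {S A : Type*} [Fintype S] [Fintype A] [DecidableEq S]
    (γ τ : ℝ) (r : S → A → ℝ) (P : S → A → S → ℝ) (h : S → (A → ℝ) → ℝ)
    (π : S → A → ℝ) (s : S) : ℝ :=
  valueFun γ τ r P h π (fun s' => if s' = s then 1 else 0)

/-- Regularized Q-function: `Q^π(s,a) = r(s,a) + γ E_{s'∼P(s,a)}[V^π(s')]`. -/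
def qFun {S A : Type*} [Fintype S] [Fintype A] [DecidableEq S]
    (γ τ : ℝ) (r : S → A → ℝ) (P : S → A → S → ℝ) (h : S → (A → ℝ) → ℝ)
    (π : S → A → ℝ) (s : S) (a : A) : ℝ :=
  r s a + γ * ∑ s', P s a s' * valueFunState γ τ r P h π s'

/-!
If `π ≠ π*`, uniqueness of the optimal policy makes the one-step gap
`g = T^π V* - V*` of the Bellman operator of `π` nonzero somewhere, while optimality of `π*`
among stationary policies forces `g ≤ 0` everywhere (compare `π*` with the policy that deviates
to `π` at a single state). The performance-difference identity
`ρ ⬝ V^π - ρ ⬝ V* = ∑ₜ γᵗ ⟪ρ Pπᵗ, g⟫` with `ρ = P(s, a, ·)` then gives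
`Q^π(s, a) < Q^{π*}(s, a)`: by irreducibility the chain started from `ρ` reaches a state where
`g < 0` with positive probability at some time `i`.
-/

open Matrix

section Simplex

variable {S : Type*} [Fintype S]

lemma vecMul_mem_stdSimplex [DecidableEq S] {x : S → ℝ} {M : Matrix S S ℝ}
    (hx : x ∈ stdSimplex ℝ S) (hM : M ∈ rowStochastic ℝ S) : x ᵥ* M ∈ stdSimplex ℝ S := by
  refine ⟨nonneg_vecMul_of_mem_rowStochastic hM hx.1, ?_⟩
  rw [← dotProduct_one,
    vecMul_dotProduct_one_eq_one_rowStochastic hM (by rw [dotProduct_one, hx.2])]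

lemma abs_dotProduct_le_of_mem_stdSimplex {d : S → ℝ} (hd : d ∈ stdSimplex ℝ S) (f : S → ℝ) :
    |d ⬝ᵥ f| ≤ ∑ s, |f s| := by
  refine (Finset.abs_sum_le_sum_abs _ _).trans (Finset.sum_le_sum fun s _ => ?_)
  obtain ⟨hd0, hd1⟩ := mem_Icc_of_mem_stdSimplex hd s
  rw [abs_mul, abs_of_nonneg hd0]
  exact mul_le_of_le_one_left (abs_nonneg _) hd1

lemma summable_geometric_mul_dotProduct {γ : ℝ} (hγ0 : 0 ≤ γ) (hγ1 : γ < 1)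
    {d : ℕ → S → ℝ} (hd : ∀ t, d t ∈ stdSimplex ℝ S) (f : S → ℝ) :
    Summable fun t => γ ^ t * (d t ⬝ᵥ f) := by
  refine Summable.of_norm_bounded
    ((summable_geometric_of_lt_one hγ0 hγ1).mul_right (∑ s, |f s|)) fun t => ?_
  rw [Real.norm_eq_abs, abs_mul, abs_of_nonneg (pow_nonneg hγ0 t)]
  exact mul_le_mul_of_nonneg_left (abs_dotProduct_le_of_mem_stdSimplex (hd t) f)
    (pow_nonneg hγ0 t)

end Simplex

lemma setOf_mem_and_forall_le_eq_singleton {α β : Type*} [Preorder β] {s : Set α}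
    {f : α → β} {x : α} (hx : x ∈ s) (hlt : ∀ y ∈ s, y ≠ x → f y < f x) :
    {y | y ∈ s ∧ ∀ z ∈ s, f z ≤ f y} = {x} := by
  ext y
  constructor
  · rintro ⟨hy, hmax⟩
    by_contra hne
    exact (hlt y hy hne).not_ge (hmax x hx)
  · rintro rfl
    refine ⟨hx, fun z hz => ?_⟩
    rcases eq_or_ne z y with rfl | hne
    · exact le_rfl
    · exact (hlt z hz hne).le

section RegularizedMDP

variable {S A : Type*} [Fintype S] [Fintype A]
  {γ τ : ℝ} {r : S → A → ℝ} {P : S → A → S → ℝ} {h : S → (A → ℝ) → ℝ} {π σ : S → A → ℝ}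

def IsPolicy (π : S → A → ℝ) : Prop :=
  ∀ s, π s ∈ stdSimplex ℝ A

def policyReward (τ : ℝ) (r : S → A → ℝ) (h : S → (A → ℝ) → ℝ) (π : S → A → ℝ) (s : S) : ℝ :=
  (∑ a, π s a * r s a) - τ * h s (π s)

def policyKernel (P : S → A → S → ℝ) (π : S → A → ℝ) : Matrix S S ℝ :=
  of fun s s' => ∑ a, π s a * P s a s'

def bellmanOp (γ τ : ℝ) (r : S → A → ℝ) (P : S → A → S → ℝ) (h : S → (A → ℝ) → ℝ)
    (π : S → A → ℝ) (W : S → ℝ) : S → ℝ :=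
  policyReward τ r h π + γ • (policyKernel P π *ᵥ W)

lemma bellmanOp_apply_congr {s : S} (hs : π s = σ s) (W : S → ℝ) :
    bellmanOp γ τ r P h π W s = bellmanOp γ τ r P h σ W s := by
  simp only [bellmanOp, policyReward, policyKernel, Pi.add_apply, Pi.smul_apply, mulVec,
    dotProduct, of_apply, hs]

lemma stateDist_succ (ρ : S → ℝ) (t : ℕ) :
    stateDist P π ρ (t + 1) = stateDist P π ρ t ᵥ* policyKernel P π := by
  ext s'
  simp only [stateDist, vecMul, dotProduct, policyKernel, of_apply, Finset.mul_sum, mul_assoc]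

lemma valueFun_eq_tsum (ρ : S → ℝ) :
    valueFun γ τ r P h π ρ =
      ∑' t, γ ^ t * (stateDist P π ρ t ⬝ᵥ policyReward τ r h π) := rfl

variable [DecidableEq S]

lemma policyKernel_mem_rowStochastic (hP : ∀ s a, P s a ∈ stdSimplex ℝ S) (hπ : IsPolicy π) :
    policyKernel P π ∈ rowStochastic ℝ S := by
  refine mem_rowStochastic_iff_sum.2 ⟨fun s s' => ?_, fun s => ?_⟩
  · exact Finset.sum_nonneg fun a _ => mul_nonneg ((hπ s).1 a) ((hP s a).1 s')
  · simp only [policyKernel, of_apply]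
    rw [Finset.sum_comm]
    simp only [← Finset.mul_sum, (hP s _).2, mul_one, (hπ s).2]

lemma stateDist_eq_vecMul_pow (ρ : S → ℝ) (t : ℕ) :
    stateDist P π ρ t = ρ ᵥ* policyKernel P π ^ t := by
  induction t with
  | zero => simp [stateDist]
  | succ t ih => rw [stateDist_succ, ih, vecMul_vecMul, pow_succ]

lemma stateDist_mem_stdSimplex (hP : ∀ s a, P s a ∈ stdSimplex ℝ S) (hπ : IsPolicy π)
    {ρ : S → ℝ} (hρ : ρ ∈ stdSimplex ℝ S) (t : ℕ) : stateDist P π ρ t ∈ stdSimplex ℝ S := by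
  rw [stateDist_eq_vecMul_pow]
  exact vecMul_mem_stdSimplex hρ (pow_mem (policyKernel_mem_rowStochastic hP hπ) t)

lemma summable_stateDist_dotProduct (hγ0 : 0 ≤ γ) (hγ1 : γ < 1)
    (hP : ∀ s a, P s a ∈ stdSimplex ℝ S) (hπ : IsPolicy π)
    {ρ : S → ℝ} (hρ : ρ ∈ stdSimplex ℝ S) (f : S → ℝ) :
    Summable fun t => γ ^ t * (stateDist P π ρ t ⬝ᵥ f) :=
  summable_geometric_mul_dotProduct hγ0 hγ1 (stateDist_mem_stdSimplex hP hπ hρ) f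

lemma valueFunState_eq_valueFun_single (s : S) :
    valueFunState γ τ r P h π s = valueFun γ τ r P h π (Pi.single s 1) := by
  rw [valueFunState]
  congr 1
  ext s'
  exact (Pi.single_apply s 1 s').symm

lemma valueFunState_eq_tsum (s : S) :
    valueFunState γ τ r P h π s =
      ∑' t, γ ^ t * (policyKernel P π ^ t *ᵥ policyReward τ r h π) s := by
  simp only [valueFunState_eq_valueFun_single, valueFun_eq_tsum, stateDist_eq_vecMul_pow,
    ← dotProduct_mulVec, single_one_dotProduct]

lemma valueFun_eq_dotProduct (hγ0 : 0 ≤ γ) (hγ1 : γ < 1)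
    (hP : ∀ s a, P s a ∈ stdSimplex ℝ S) (hπ : IsPolicy π) (ρ : S → ℝ) :
    valueFun γ τ r P h π ρ = ρ ⬝ᵥ valueFunState γ τ r P h π := by
  have hsummable (s : S) :
      Summable fun t => γ ^ t * (policyKernel P π ^ t *ᵥ policyReward τ r h π) s := by
    simpa only [stateDist_eq_vecMul_pow, ← dotProduct_mulVec, single_one_dotProduct] using
      summable_stateDist_dotProduct hγ0 hγ1 hP hπ (single_mem_stdSimplex ℝ s)
        (policyReward τ r h π)
  simp only [valueFun_eq_tsum, stateDist_eq_vecMul_pow, ← dotProduct_mulVec]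
  simp only [dotProduct, Finset.mul_sum, valueFunState_eq_tsum, ← tsum_mul_left]
  rw [← Summable.tsum_finsetSum fun s _ => (hsummable s).mul_left (ρ s)]
  exact tsum_congr fun t => Finset.sum_congr rfl fun s _ => mul_left_comm _ _ _

lemma valueFun_eq_dotProduct_add_valueFun_vecMul (hγ0 : 0 ≤ γ) (hγ1 : γ < 1)
    (hP : ∀ s a, P s a ∈ stdSimplex ℝ S) (hπ : IsPolicy π)
    {ρ : S → ℝ} (hρ : ρ ∈ stdSimplex ℝ S) :
    valueFun γ τ r P h π ρ =
      ρ ⬝ᵥ policyReward τ r h π + γ * valueFun γ τ r P h π (ρ ᵥ* policyKernel P π) := by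
  rw [valueFun_eq_tsum, (summable_stateDist_dotProduct hγ0 hγ1 hP hπ hρ _).tsum_eq_zero_add,
    valueFun_eq_tsum, ← tsum_mul_left]
  simp only [stateDist_eq_vecMul_pow, pow_zero, vecMul_one, one_mul, pow_succ', vecMul_vecMul,
    mul_assoc]

lemma valueFunState_eq_bellmanOp (hγ0 : 0 ≤ γ) (hγ1 : γ < 1)
    (hP : ∀ s a, P s a ∈ stdSimplex ℝ S) (hπ : IsPolicy π) :
    valueFunState γ τ r P h π = bellmanOp γ τ r P h π (valueFunState γ τ r P h π) := by
  ext s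
  rw [valueFunState_eq_valueFun_single,
    valueFun_eq_dotProduct_add_valueFun_vecMul hγ0 hγ1 hP hπ (single_mem_stdSimplex ℝ s),
    valueFun_eq_dotProduct hγ0 hγ1 hP hπ, ← dotProduct_mulVec, single_one_dotProduct,
    single_one_dotProduct]
  rfl

/-- The performance-difference identity, with an arbitrary comparison function `W`. -/
lemma valueFun_sub_dotProduct_eq_tsum (hγ0 : 0 ≤ γ) (hγ1 : γ < 1)
    (hP : ∀ s a, P s a ∈ stdSimplex ℝ S) (hπ : IsPolicy π)
    {ρ : S → ℝ} (hρ : ρ ∈ stdSimplex ℝ S) (W : S → ℝ) :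
    valueFun γ τ r P h π ρ - ρ ⬝ᵥ W =
      ∑' t, γ ^ t * (stateDist P π ρ t ⬝ᵥ (bellmanOp γ τ r P h π W - W)) := by
  set d := stateDist P π ρ
  have hreward := summable_stateDist_dotProduct hγ0 hγ1 hP hπ hρ (policyReward τ r h π)
  have hW := summable_stateDist_dotProduct hγ0 hγ1 hP hπ hρ W
  have hW_succ : Summable fun t => γ ^ (t + 1) * (d (t + 1) ⬝ᵥ W) :=
    (summable_nat_add_iff 1).2 hW
  have htelescope (t : ℕ) : γ ^ t * (d t ⬝ᵥ (bellmanOp γ τ r P h π W - W)) =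
      γ ^ t * (d t ⬝ᵥ policyReward τ r h π) + γ ^ (t + 1) * (d (t + 1) ⬝ᵥ W) -
        γ ^ t * (d t ⬝ᵥ W) := by
    rw [bellmanOp, dotProduct_sub, dotProduct_add, dotProduct_smul, dotProduct_mulVec,
      ← stateDist_succ, smul_eq_mul, pow_succ]
    ring
  rw [tsum_congr htelescope, (hreward.add hW_succ).tsum_sub hW, hreward.tsum_add hW_succ,
    hW.tsum_eq_zero_add, valueFun_eq_tsum]
  simp only [d, stateDist, pow_zero, one_mul]
  ring

lemma one_le_tsum_stateDist_single (hγ0 : 0 ≤ γ) (hγ1 : γ < 1)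
    (hP : ∀ s a, P s a ∈ stdSimplex ℝ S) (hπ : IsPolicy π) (s : S) :
    1 ≤ ∑' t, γ ^ t * stateDist P π (Pi.single s 1) t s := by
  have hsummable : Summable fun t => γ ^ t * stateDist P π (Pi.single s 1) t s := by
    simpa only [dotProduct_single_one] using
      summable_stateDist_dotProduct hγ0 hγ1 hP hπ (single_mem_stdSimplex ℝ s) (Pi.single s 1)
  refine le_of_eq_of_le ?_ (hsummable.le_tsum 0 fun t _ => mul_nonneg (pow_nonneg hγ0 t)
    ((stateDist_mem_stdSimplex hP hπ (single_mem_stdSimplex ℝ s) t).1 s))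
  simp [stateDist]

variable {πstar : S → A → ℝ}

/-- Bellman optimality inequality. The policy `σ` that follows `π` at `s` and `πstar` elsewhere
has gap `T^σ V* - V*` supported at `s`, so its loss `V^σ(s) - V*(s) ≤ 0` is the gap at `s`
times the expected discounted number of visits to `s`, which is at least `1`. -/
lemma bellmanOp_valueFunState_le (hγ0 : 0 ≤ γ) (hγ1 : γ < 1)
    (hP : ∀ s a, P s a ∈ stdSimplex ℝ S) (hπstar : IsPolicy πstar)
    (hopt : ∀ σ, IsPolicy σ → valueFunState γ τ r P h σ ≤ valueFunState γ τ r P h πstar)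
    (hπ : IsPolicy π) :
    bellmanOp γ τ r P h π (valueFunState γ τ r P h πstar) ≤ valueFunState γ τ r P h πstar := by
  intro s
  set V := valueFunState γ τ r P h πstar
  set σ := Function.update πstar s (π s)
  have hσ : IsPolicy σ := fun s' => by
    rcases eq_or_ne s' s with rfl | hne
    · simpa [σ] using hπ s'
    · simpa [σ, hne] using hπstar s'
  have hfixed : bellmanOp γ τ r P h πstar V = V :=
    (valueFunState_eq_bellmanOp hγ0 hγ1 hP hπstar).symm
  have hgap : bellmanOp γ τ r P h σ V - V = Pi.single s (bellmanOp γ τ r P h π V s - V s) := by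
    ext s'
    rcases eq_or_ne s' s with rfl | hne
    · simp [bellmanOp_apply_congr (Function.update_self s' (π s') πstar) V, σ]
    · rw [Pi.sub_apply, bellmanOp_apply_congr (Function.update_of_ne hne (π s) πstar) V,
        Pi.single_eq_of_ne hne, hfixed, sub_self]
  have hloss := valueFun_sub_dotProduct_eq_tsum (τ := τ) (r := r) (h := h) hγ0 hγ1 hP hσ
    (single_mem_stdSimplex ℝ s) V
  simp only [hgap, dotProduct_single, ← mul_assoc, tsum_mul_right] at hloss
  rw [← valueFunState_eq_valueFun_single, single_one_dotProduct] at hloss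
  refine sub_nonpos.1 (nonpos_of_mul_nonpos_right ?_
    (one_pos.trans_le (one_le_tsum_stateDist_single hγ0 hγ1 hP hσ s)))
  exact hloss ▸ sub_nonpos.2 (hopt σ hσ s)

lemma exists_bellmanOp_valueFunState_lt (hγ0 : 0 ≤ γ) (hγ1 : γ < 1)
    (hP : ∀ s a, P s a ∈ stdSimplex ℝ S) (hπstar : IsPolicy πstar)
    (hopt : ∀ σ, IsPolicy σ → valueFunState γ τ r P h σ ≤ valueFunState γ τ r P h πstar)
    (huniq : ∀ σ, IsPolicy σ →
      (∀ σ', IsPolicy σ' → valueFunState γ τ r P h σ' ≤ valueFunState γ τ r P h σ) →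
        σ = πstar)
    (hπ : IsPolicy π) (hne : π ≠ πstar) :
    ∃ s, bellmanOp γ τ r P h π (valueFunState γ τ r P h πstar) s <
      valueFunState γ τ r P h πstar s := by
  set V := valueFunState γ τ r P h πstar
  by_contra! hge
  have hgap : bellmanOp γ τ r P h π V - V = 0 := funext fun s =>
    sub_eq_zero.2 (le_antisymm (bellmanOp_valueFunState_le hγ0 hγ1 hP hπstar hopt hπ s) (hge s))
  have hV : valueFunState γ τ r P h π = V := funext fun s => by
    have hloss := valueFun_sub_dotProduct_eq_tsum (τ := τ) (r := r) (h := h) hγ0 hγ1 hP hπ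
      (single_mem_stdSimplex ℝ s) V
    rw [hgap, ← valueFunState_eq_valueFun_single, single_one_dotProduct] at hloss
    simpa [sub_eq_zero] using hloss
  exact hne (huniq π hπ fun σ hσ => hV ▸ hopt σ hσ)

lemma dotProduct_valueFunState_lt (hγ0 : 0 < γ) (hγ1 : γ < 1)
    (hP : ∀ s a, P s a ∈ stdSimplex ℝ S) (hπ : IsPolicy π)
    {ρ W : S → ℝ} (hρ : ρ ∈ stdSimplex ℝ S) (hW : bellmanOp γ τ r P h π W ≤ W)
    {i : ℕ} {s : S} (hvisit : 0 < stateDist P π ρ i s) (hs : bellmanOp γ τ r P h π W s < W s) :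
    ρ ⬝ᵥ valueFunState γ τ r P h π < ρ ⬝ᵥ W := by
  rw [← valueFun_eq_dotProduct hγ0.le hγ1 hP hπ, ← sub_neg,
    valueFun_sub_dotProduct_eq_tsum hγ0.le hγ1 hP hπ hρ]
  set d := stateDist P π ρ
  have hterm (t : ℕ) (s' : S) : d t s' * (bellmanOp γ τ r P h π W - W) s' ≤ 0 :=
    mul_nonpos_of_nonneg_of_nonpos ((stateDist_mem_stdSimplex hP hπ hρ t).1 s')
      (sub_nonpos.2 (hW s'))
  have hneg : d i ⬝ᵥ (bellmanOp γ τ r P h π W - W) < 0 := by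
    have := Finset.sum_lt_sum (fun s' _ => hterm i s')
      ⟨s, Finset.mem_univ s, mul_neg_of_pos_of_neg hvisit (sub_neg.2 hs)⟩
    rwa [Finset.sum_const_zero] at this
  rw [← tsum_zero]
  refine Summable.tsum_lt_tsum (i := i) (fun t => ?_) (mul_neg_of_pos_of_neg (pow_pos hγ0 i) hneg)
    (summable_stateDist_dotProduct hγ0.le hγ1 hP hπ hρ _) summable_zero
  exact mul_nonpos_of_nonneg_of_nonpos (pow_nonneg hγ0.le t)
    (Finset.sum_nonpos fun s' _ => hterm t s')

end RegularizedMDP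

theorem strict_q_dominance_of_unique_optimal_general {S A : Type*} [Fintype S] [Fintype A]
    [DecidableEq S]
    (γ τ : ℝ) (hγ0 : 0 < γ) (hγ1 : γ < 1)
    (r : S → A → ℝ) (P : S → A → S → ℝ)
    (hP : ∀ s a, (∀ s', 0 ≤ P s a s') ∧ ∑ s', P s a s' = 1)
    (h : S → (A → ℝ) → ℝ)
    (Pol : Set (S → A → ℝ))
    (hPol : Pol = {π | ∀ s, (∀ a, 0 ≤ π s a) ∧ ∑ a, π s a = 1})
    (hirr : ∀ π ∈ Pol, ∀ s a (sbar : S),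
      ∃ i : ℕ, 0 < stateDist P π (fun s' => P s a s') i sbar)
    (πstar : S → A → ℝ) (hπstar : πstar ∈ Pol)
    (hopt : ∀ π ∈ Pol, ∀ s,
      valueFunState γ τ r P h π s ≤ valueFunState γ τ r P h πstar s)
    (huniq : ∀ π ∈ Pol,
      (∀ π' ∈ Pol, ∀ s,
        valueFunState γ τ r P h π' s ≤ valueFunState γ τ r P h π s) → π = πstar) :
    (∀ π ∈ Pol, π ≠ πstar → ∀ s a, qFun γ τ r P h π s a < qFun γ τ r P h πstar s a) ∧
    (∀ s a, {π | π ∈ Pol ∧ ∀ π' ∈ Pol, qFun γ τ r P h π' s a ≤ qFun γ τ r P h π s a}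
      = {πstar}) := by
  subst hPol
  have hq_lt : ∀ π : S → A → ℝ, IsPolicy π → π ≠ πstar →
      ∀ s a, qFun γ τ r P h π s a < qFun γ τ r P h πstar s a := by
    intro π hπ hne s a
    obtain ⟨sbar, hsbar⟩ :=
      exists_bellmanOp_valueFunState_lt hγ0.le hγ1 hP hπstar hopt huniq hπ hne
    obtain ⟨i, hi⟩ := hirr π hπ s a sbar
    have hV := dotProduct_valueFunState_lt hγ0 hγ1 hP hπ (hP s a)
      (bellmanOp_valueFunState_le hγ0.le hγ1 hP hπstar hopt hπ) hi hsbar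
    exact add_lt_add_right (mul_lt_mul_of_pos_left hV hγ0) (r s a)
  exact ⟨hq_lt, fun s a => setOf_mem_and_forall_le_eq_singleton hπstar
    fun π hπ hne => hq_lt π hπ hne s a⟩

/-- **Strict Q-dominance of the unique optimal policy under irreducibility.**
In a `τ`-regularized finite MDP whose induced Markov chain is irreducible under every
policy, any policy `π ∈ Pol` different from the unique optimal policy `πstar`
satisfies `Q^π(s,a) < Q^{πstar}(s,a)` for every `(s,a)`; hence for every `(s,a)` the
set `argmax_{π∈Pol} Q^π(s,a)` is the singleton `{πstar}`. -/
theorem strict_q_dominance_of_unique_optimal {S A : Type*} [Fintype S] [Fintype A]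
    [DecidableEq S] [Nonempty S] [Nonempty A]
    (γ τ : ℝ) (hγ0 : 0 < γ) (hγ1 : γ < 1) (hτ : 0 ≤ τ)
    (r : S → A → ℝ) (P : S → A → S → ℝ)
    (hP : ∀ s a, (∀ s', 0 ≤ P s a s') ∧ ∑ s', P s a s' = 1)
    (h : S → (A → ℝ) → ℝ)
    (Pol : Set (S → A → ℝ))
    (hPol : Pol = {π | ∀ s, (∀ a, 0 ≤ π s a) ∧ ∑ a, π s a = 1})
    (hirr : ∀ π ∈ Pol, ∀ s a (sbar : S),
      ∃ i : ℕ, 0 < stateDist P π (fun s' => P s a s') i sbar)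
    (πstar : S → A → ℝ) (hπstar : πstar ∈ Pol)
    (hopt : ∀ π ∈ Pol, ∀ s,
      valueFunState γ τ r P h π s ≤ valueFunState γ τ r P h πstar s)
    (huniq : ∀ π ∈ Pol,
      (∀ π' ∈ Pol, ∀ s,
        valueFunState γ τ r P h π' s ≤ valueFunState γ τ r P h π s) → π = πstar) :
    (∀ π ∈ Pol, π ≠ πstar → ∀ s a, qFun γ τ r P h π s a < qFun γ τ r P h πstar s a) ∧
    (∀ s a, {π | π ∈ Pol ∧ ∀ π' ∈ Pol, qFun γ τ r P h π' s a ≤ qFun γ τ r P h π s a}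
      = {πstar}) :=
  strict_q_dominance_of_unique_optimal_general γ τ hγ0 hγ1 r P hP h Pol hPol hirr πstar hπstar hopt
    huniq

end
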